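/- If K_g is a positive semidefinite symmetric kernel on X, then the tensor product pairwise kernel K_TPPK((x₁,x₂),(x₃,x₄)) = K_g(x₁,x₃)K_g(x₂,x₄) + K_g(x₁,x₄)K_g(x₂,x₃) is a positive semidefinite kernel on X × X. -/

import Mathlib

/-!
The TPPK kernel is the symmetrization `k p q + k p q.swap` of the tensor product kernel
`k p q = Kg p.1 q.1 * Kg p.2 q.2`, which is positive semidefinite by the Schur product theorem
applied to Gram matrices. Since `k` is invariant under swapping both arguments, the quadratic form
of its symmetrization at points `s` with weights `c` is half the quadratic form of `k` at the
doubled family `s, Prod.swap ∘ s` with weights `c, c`.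
-/

open Matrix

def IsPosSemidefKernel {X : Type*} (K : X → X → ℝ) : Prop :=
  ∀ (n : ℕ) (s : Fin n → X) (c : Fin n → ℝ), 0 ≤ ∑ i, ∑ j, c i * c j * K (s i) (s j)

def gramMatrix {X ι : Type*} (K : X → X → ℝ) (s : ι → X) : Matrix ι ι ℝ :=
  of fun i j => K (s i) (s j)

lemma Matrix.star_dotProduct_mulVec_eq_sum {ι : Type*} [Fintype ι] (M : Matrix ι ι ℝ)
    (c : ι → ℝ) : star c ⬝ᵥ M *ᵥ c = ∑ i, ∑ j, c i * c j * M i j := by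
  simp only [dotProduct, mulVec, Pi.star_apply, star_trivial, Finset.mul_sum]
  exact Finset.sum_congr rfl fun i _ => Finset.sum_congr rfl fun j _ => by ring

namespace IsPosSemidefKernel

variable {X : Type*} {K : X → X → ℝ}

lemma sum_nonneg (hK : IsPosSemidefKernel K) {ι : Type*} [Fintype ι] (s : ι → X)
    (c : ι → ℝ) : 0 ≤ ∑ i, ∑ j, c i * c j * K (s i) (s j) := by
  let e := (Fintype.equivFin ι).symm
  calc 0 ≤ _ := hK _ (s ∘ e) (c ∘ e)
    _ = _ := Fintype.sum_equiv e _ (fun i => ∑ j, c i * c j * K (s i) (s j)) fun i =>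
      e.sum_comp fun j => c (e i) * c j * K (s (e i)) (s j)

lemma posSemidef_gramMatrix (hK : IsPosSemidefKernel K) (hsymm : ∀ x y, K x y = K y x)
    {ι : Type*} [Fintype ι] (s : ι → X) : (gramMatrix K s).PosSemidef := by
  refine .of_dotProduct_mulVec_nonneg ?_ fun c => ?_
  · ext i j
    exact hsymm (s j) (s i)
  · rw [star_dotProduct_mulVec_eq_sum]
    exact hK.sum_nonneg s c

lemma of_posSemidef_gramMatrix (h : ∀ (n : ℕ) (s : Fin n → X), (gramMatrix K s).PosSemidef) :
    IsPosSemidefKernel K := fun n s c => by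
  simpa only [star_dotProduct_mulVec_eq_sum, gramMatrix, of_apply] using
    (h n s).dotProduct_mulVec_nonneg c

lemma mul_prod {Y : Type*} {L : Y → Y → ℝ} (hK : IsPosSemidefKernel K)
    (hKsymm : ∀ x y, K x y = K y x) (hL : IsPosSemidefKernel L)
    (hLsymm : ∀ x y, L x y = L y x) :
    IsPosSemidefKernel fun p q : X × Y => K p.1 q.1 * L p.2 q.2 :=
  of_posSemidef_gramMatrix fun _ s =>
    (hK.posSemidef_gramMatrix hKsymm (Prod.fst ∘ s)).hadamard
      (hL.posSemidef_gramMatrix hLsymm (Prod.snd ∘ s))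

lemma add_comp_involutive (hK : IsPosSemidefKernel K) {σ : X → X}
    (hσ : Function.Involutive σ) (hKσ : ∀ p q, K (σ p) (σ q) = K p q) :
    IsPosSemidefKernel fun p q => K p q + K p (σ q) := fun n s c => by
  have hσ_left : ∀ p q, K (σ p) q = K p (σ q) := fun p q => by
    rw [← hKσ p (σ q), hσ q]
  have hdouble := hK.sum_nonneg (Sum.elim s (σ ∘ s)) (Sum.elim c c)
  simp only [Fintype.sum_sum_type, Sum.elim_inl, Sum.elim_inr, Function.comp_apply, hKσ,
    hσ_left, ← Finset.sum_add_distrib] at hdouble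
  have hterm : ∀ i j, c i * c j * K (s i) (s j) + c i * c j * K (s i) (σ (s j)) +
      (c i * c j * K (s i) (σ (s j)) + c i * c j * K (s i) (s j)) =
      2 * (c i * c j * (K (s i) (s j) + K (s i) (σ (s j)))) := fun i j => by ring
  simp only [hterm, ← Finset.mul_sum] at hdouble
  linarith

end IsPosSemidefKernel

theorem stmt_10 (X : Type*) (Kg : X → X → ℝ) (hsymm : ∀ x y, Kg x y = Kg y x)
    (hpsd : ∀ (n : ℕ) (s : Fin n → X) (c : Fin n → ℝ),
      0 ≤ ∑ i, ∑ j, c i * c j * Kg (s i) (s j))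
    (n : ℕ) (s : Fin n → X × X) (c : Fin n → ℝ) :
    0 ≤ ∑ i, ∑ j, c i * c j *
      (Kg (s i).1 (s j).1 * Kg (s i).2 (s j).2 + Kg (s i).1 (s j).2 * Kg (s i).2 (s j).1) :=
  ((IsPosSemidefKernel.mul_prod hpsd hsymm hpsd hsymm).add_comp_involutive Prod.swap_swap
    fun _ _ => mul_comm _ _) n s c
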